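/- Suppose $Y(z)$ satisfies the recursion $Y(z) = Y(z-1)\lambda_z + \sqrt{1/N_z}\,(1-\lambda_z)$, where $N_z = \sum_{x \le z} n_x$, $N_0 = 0$, $n_x \ge 0$, $H \ge 1$, $\lambda_z = \frac{N_{z-1}}{N_z + H n_z}$ when $N_z > 0$ and $\lambda_z = 1$ when $N_z = 0$, with $Y(1) = \sqrt{1/N_1}$ if $n_1 > 0$ and $Y(1) = 0$ otherwise. Then for every $z$ with $N_z > 0$, $\sqrt{\frac{1}{N_z}} \le Y(z) \le \sqrt{\frac{4}{N_z}}$. -/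

import Mathlib

/-!
Write `a = √N(z-1)`, `b = √N z` and `D = N z + H n z ≥ b²`, so that `λ z = a² / D ∈ [0, 1]`.
The lower bound propagates because `Y z` is a convex combination of `Y (z-1) ≥ 1/a ≥ 1/b` and
`1/b`. For the upper bound, `Y (z-1) ≤ 2/a` gives `Y z ≤ 2a/D + (1 - a²/D)/b`, and this is at
most `2/b` exactly when `2ab - a² ≤ D`, which holds since `2ab - a² ≤ b² ≤ D`.
-/

lemma sqrt_one_div_le_sqrt_four_div {M : ℝ} (hM : 0 ≤ M) : √(1 / M) ≤ √(4 / M) :=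
  Real.sqrt_le_sqrt (div_le_div_of_nonneg_right (by norm_num) hM)

lemma sqrt_one_div_le_convex_step {A B y l : ℝ} (hA : 0 < A) (hAB : A ≤ B)
    (hl : 0 ≤ l) (hy : √(1 / A) ≤ y) :
    √(1 / B) ≤ y * l + √(1 / B) * (1 - l) := by
  have hBy : √(1 / B) ≤ y :=
    (Real.sqrt_le_sqrt (one_div_le_one_div_of_le hA hAB)).trans hy
  nlinarith [mul_le_mul_of_nonneg_right hBy hl]

lemma two_div_mul_add_one_div_mul_le {a b D : ℝ} (hb : 0 < b) (hD : b ^ 2 ≤ D) :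
    2 / a * (a ^ 2 / D) + 1 / b * (1 - a ^ 2 / D) ≤ 2 / b := by
  have hD₀ : 0 < D := lt_of_lt_of_le (by positivity) hD
  rw [← sub_nonneg]
  have key : 2 / b - (2 / a * (a ^ 2 / D) + 1 / b * (1 - a ^ 2 / D))
      = (D - 2 * a * b + a ^ 2) / (b * D) := by
    field_simp
    ring
  rw [key]
  exact div_nonneg (by nlinarith [sq_nonneg (a - b)]) (by positivity)

lemma convex_step_le_sqrt_four_div {A B D y : ℝ} (hA : 0 < A) (hAB : A ≤ B) (hBD : B ≤ D)
    (hy : y ≤ √(4 / A)) :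
    y * (A / D) + √(1 / B) * (1 - A / D) ≤ √(4 / B) := by
  have hB : 0 < B := hA.trans_le hAB
  have sqrt_four_div (M : ℝ) : √(4 / M) = 2 / √M := by
    rw [Real.sqrt_div (by norm_num), show (4 : ℝ) = 2 ^ 2 by norm_num, Real.sqrt_sq (by norm_num)]
  have sqrt_one_div (M : ℝ) : √(1 / M) = 1 / √M := by
    rw [one_div, Real.sqrt_inv, one_div]
  rw [sqrt_four_div] at hy ⊢
  rw [sqrt_one_div]
  have hAD : 0 ≤ A / D := div_nonneg hA.le (hB.le.trans hBD)
  calc y * (A / D) + 1 / √B * (1 - A / D)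
      ≤ 2 / √A * (√A ^ 2 / D) + 1 / √B * (1 - √A ^ 2 / D) := by
        rw [Real.sq_sqrt hA.le]
        gcongr
    _ ≤ 2 / √B :=
        two_div_mul_add_one_div_mul_le (Real.sqrt_pos.mpr hB)
          (by rwa [Real.sq_sqrt hB.le])

lemma convex_step_mem_bounds {A B D y : ℝ} (hA : 0 < A) (hAB : A ≤ B) (hBD : B ≤ D)
    (hy : √(1 / A) ≤ y ∧ y ≤ √(4 / A)) :
    √(1 / B) ≤ y * (A / D) + √(1 / B) * (1 - A / D) ∧
      y * (A / D) + √(1 / B) * (1 - A / D) ≤ √(4 / B) :=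
  ⟨sqrt_one_div_le_convex_step hA hAB (div_nonneg hA.le (hA.le.trans (hAB.trans hBD))) hy.1,
    convex_step_le_sqrt_four_div hA hAB hBD hy.2⟩

theorem stmt_7_general (H : ℕ)
    (n : ℕ → ℕ)
    (N : ℕ → ℕ) (hN : ∀ z, N z = ∑ x ∈ Finset.Icc 1 z, n x)
    (lam : ℕ → ℝ)
    (hlam1 : ∀ z, 0 < N z → lam z = (N (z - 1) : ℝ) / ((N z : ℝ) + (H : ℝ) * n z))
    (Y : ℕ → ℝ)
    (hY1pos : 0 < n 1 → Y 1 = Real.sqrt (1 / (N 1 : ℝ)))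
    (hYrec : ∀ z, 2 ≤ z →
      Y z = Y (z - 1) * lam z + Real.sqrt (1 / (N z : ℝ)) * (1 - lam z)) :
    ∀ z, 1 ≤ z → 0 < N z →
      Real.sqrt (1 / (N z : ℝ)) ≤ Y z ∧ Y z ≤ Real.sqrt (4 / (N z : ℝ)) := by
  have hN_succ (k : ℕ) : N (k + 1) = N k + n (k + 1) := by
    rw [hN, hN, Finset.sum_Icc_succ_top (by omega)]
  intro z hz
  induction z, hz using Nat.le_induction with
  | base =>
    intro hN₁
    have hn₁ : 0 < n 1 := by simpa [hN] using hN₁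
    rw [hY1pos hn₁]
    exact ⟨le_rfl, sqrt_one_div_le_sqrt_four_div (Nat.cast_nonneg _)⟩
  | succ k hk ih =>
    intro hNk₁
    rw [hYrec (k + 1) (by omega), hlam1 (k + 1) hNk₁, Nat.add_sub_cancel]
    rcases (N k).eq_zero_or_pos with hNk | hNk
    · simp only [hNk, Nat.cast_zero, zero_div, mul_zero, sub_zero, mul_one, zero_add]
      exact ⟨le_rfl, sqrt_one_div_le_sqrt_four_div (Nat.cast_nonneg _)⟩
    · exact convex_step_mem_bounds (by exact_mod_cast hNk)
        (by exact_mod_cast hN_succ k ▸ Nat.le_add_right _ _)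
        (le_add_of_nonneg_right (by positivity)) (ih hNk)

/-- Two-sided bound on the accumulated penalty `Y`: with per-round visit counts
`n x : ℕ`, cumulative counts `N z = ∑_{x=1}^z n x`, `H ≥ 1`, contraction factors
`λ z = N (z-1) / (N z + H n z)` when `N z > 0` and `λ z = 1` when `N z = 0`,
initial value `Y 1 = √(1/N 1)` if `n 1 > 0` (else `0`), and recursion
`Y z = Y (z-1) λ z + √(1/N z) (1 - λ z)`, one has for every `z ≥ 1` with
`N z > 0` that `√(1/N z) ≤ Y z ≤ √(4/N z)`. -/
theorem stmt_7 (H : ℕ) (hH : 1 ≤ H)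
    (n : ℕ → ℕ)
    (N : ℕ → ℕ) (hN : ∀ z, N z = ∑ x ∈ Finset.Icc 1 z, n x)
    (lam : ℕ → ℝ)
    (hlam0 : ∀ z, N z = 0 → lam z = 1)
    (hlam1 : ∀ z, 0 < N z → lam z = (N (z - 1) : ℝ) / ((N z : ℝ) + (H : ℝ) * n z))
    (Y : ℕ → ℝ)
    (hY1pos : 0 < n 1 → Y 1 = Real.sqrt (1 / (N 1 : ℝ)))
    (hY1zero : n 1 = 0 → Y 1 = 0)
    (hYrec : ∀ z, 2 ≤ z →
      Y z = Y (z - 1) * lam z + Real.sqrt (1 / (N z : ℝ)) * (1 - lam z)) :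
    ∀ z, 1 ≤ z → 0 < N z →
      Real.sqrt (1 / (N z : ℝ)) ≤ Y z ∧ Y z ≤ Real.sqrt (4 / (N z : ℝ)) :=
  stmt_7_general H n N hN lam hlam1 Y hY1pos hYrec
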